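/- Let Y, Ŷ, Y* be d×d real matrices such that ‖Y‖₁ ≤ ‖Y*‖₁, ‖Ŷ‖₁ ≤ ‖Y*‖₁ (entrywise ℓ₁ norms), and Y* has at most s nonzero entries in each row. Then ‖Y - Ŷ‖₁ ≤ 2√(sd) · ‖Y - Ŷ‖_F + 4√(sd) · ‖Ŷ - Y*‖_F. -/

import Mathlib

/-!
If `‖x‖₁ ≤ ‖y‖₁` and `y` vanishes off `T`, then off `T` the error `x - y` is just `x`, and
`‖x|_Tᶜ‖₁ ≤ ‖y‖₁ - ‖x|_T‖₁ = ‖y|_T‖₁ - ‖x|_T‖₁ ≤ ‖(x - y)|_T‖₁`. Hence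
`‖x - y‖₁ ≤ 2 ‖(x - y)|_T‖₁ ≤ 2 √|T| ‖x - y‖₂` by Cauchy–Schwarz, and a row-wise `s`-sparse
`d × d` matrix has support of size `|T| ≤ s d`. Applying this to `Y` and `Ŷ` against `Y*`, the
triangle inequality in `ℓ¹` and Minkowski's inequality `‖Y - Y*‖_F ≤ ‖Y - Ŷ‖_F + ‖Ŷ - Y*‖_F`
give the bound.
-/

open Finset

section
variable {ι : Type*}

theorem Finset.sum_abs_le_sqrt_card_mul_sqrt_sum_sq (s : Finset ι) (f : ι → ℝ) :
    ∑ i ∈ s, |f i| ≤ √(#s : ℝ) * √(∑ i ∈ s, f i ^ 2) := by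
  rw [← Real.sqrt_mul (Nat.cast_nonneg _), Real.le_sqrt (sum_nonneg fun i _ => abs_nonneg _)
    (by positivity)]
  simpa only [sq_abs] using sq_sum_le_card_mul_sum_sq (s := s) (f := fun i => |f i|)

variable [Fintype ι]

theorem Real.sqrt_sum_sq_add_le (f g : ι → ℝ) :
    √(∑ i, (f i + g i) ^ 2) ≤ √(∑ i, f i ^ 2) + √(∑ i, g i ^ 2) := by
  simpa only [EuclideanSpace.norm_eq, Real.norm_eq_abs, sq_abs, WithLp.ofLp_add,
    Pi.add_apply] using
    norm_add_le (WithLp.toLp 2 f : EuclideanSpace ℝ ι) (WithLp.toLp 2 g)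

theorem sum_abs_sub_le_two_mul_sum_abs_sub_of_sum_abs_le [DecidableEq ι] {x y : ι → ℝ}
    {T : Finset ι} (hy : ∀ i ∉ T, y i = 0) (hxy : ∑ i, |x i| ≤ ∑ i, |y i|) :
    ∑ i, |x i - y i| ≤ 2 * ∑ i ∈ T, |x i - y i| := by
  have hoff : ∑ i ∈ Tᶜ, |x i - y i| = ∑ i ∈ Tᶜ, |x i| :=
    sum_congr rfl fun i hi => by rw [hy i (mem_compl.1 hi), sub_zero]
  have hy_on : ∑ i ∈ Tᶜ, |y i| = 0 :=
    sum_eq_zero fun i hi => by rw [hy i (mem_compl.1 hi), abs_zero]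
  have hrev : ∑ i ∈ T, (|y i| - |x i|) ≤ ∑ i ∈ T, |x i - y i| :=
    sum_le_sum fun i _ => abs_sub_comm (x i) (y i) ▸ abs_sub_abs_le_abs_sub _ _
  rw [← sum_compl_add_sum T] at hxy ⊢
  rw [← sum_compl_add_sum T, hy_on, zero_add] at hxy
  rw [sum_sub_distrib] at hrev
  linarith

theorem sum_abs_sub_le_of_sum_abs_le {x y : ι → ℝ} {k : ℕ} (hk : #{i | y i ≠ 0} ≤ k)
    (hxy : ∑ i, |x i| ≤ ∑ i, |y i|) :
    ∑ i, |x i - y i| ≤ 2 * √(k : ℝ) * √(∑ i, (x i - y i) ^ 2) := by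
  classical
  set T : Finset ι := {i | y i ≠ 0}
  have hy : ∀ i ∉ T, y i = 0 := by simp [T]
  calc ∑ i, |x i - y i|
      ≤ 2 * ∑ i ∈ T, |x i - y i| := sum_abs_sub_le_two_mul_sum_abs_sub_of_sum_abs_le hy hxy
    _ ≤ 2 * (√(#T : ℝ) * √(∑ i ∈ T, (x i - y i) ^ 2)) := by
        gcongr; exact T.sum_abs_le_sqrt_card_mul_sqrt_sum_sq _
    _ ≤ 2 * (√(k : ℝ) * √(∑ i, (x i - y i) ^ 2)) := by
        gcongr 2 * (√?_ * √?_)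
        · exact_mod_cast hk
        · exact sum_le_sum_of_subset_of_nonneg (subset_univ T) fun i _ _ => sq_nonneg _
    _ = 2 * √(k : ℝ) * √(∑ i, (x i - y i) ^ 2) := by ring

theorem sum_abs_sub_le_of_sum_abs_le_of_sum_abs_le {x x' y : ι → ℝ} {k : ℕ}
    (hk : #{i | y i ≠ 0} ≤ k) (hx : ∑ i, |x i| ≤ ∑ i, |y i|) (hx' : ∑ i, |x' i| ≤ ∑ i, |y i|) :
    ∑ i, |x i - x' i| ≤
      2 * √(k : ℝ) * √(∑ i, (x i - x' i) ^ 2) + 4 * √(k : ℝ) * √(∑ i, (x' i - y i) ^ 2) := by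
  have htri : ∑ i, |x i - x' i| ≤ ∑ i, |x i - y i| + ∑ i, |x' i - y i| := by
    rw [← sum_add_distrib]
    exact sum_le_sum fun i _ => (abs_sub_le _ (y i) _).trans_eq (by rw [abs_sub_comm (y i)])
  have hmink :
      √(∑ i, (x i - y i) ^ 2) ≤ √(∑ i, (x i - x' i) ^ 2) + √(∑ i, (x' i - y i) ^ 2) := by
    simpa only [sub_add_sub_cancel] using
      Real.sqrt_sum_sq_add_le (fun i => x i - x' i) (fun i => x' i - y i)
  have hx_err := sum_abs_sub_le_of_sum_abs_le hk hx
  have hx'_err := sum_abs_sub_le_of_sum_abs_le hk hx'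
  have hk_nonneg : 0 ≤ √(k : ℝ) := Real.sqrt_nonneg _
  nlinarith [mul_le_mul_of_nonneg_left hmink hk_nonneg]

end

theorem Matrix.card_filter_ne_zero_le {m n α : Type*} [Fintype m] [Fintype n] [Zero α]
    [DecidableEq α] (A : Matrix m n α) {s : ℕ} (h : ∀ i, #{j | A i j ≠ 0} ≤ s) :
    #{p : m × n | A p.1 p.2 ≠ 0} ≤ s * Fintype.card m := by
  rw [card_filter, Fintype.sum_prod_type]
  simp only [← card_filter]
  simpa [mul_comm] using sum_le_sum fun i (_ : i ∈ univ) => h i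

theorem stmt_6 (d s : ℕ) (Y Yhat Ystar : Matrix (Fin d) (Fin d) ℝ)
    (hY : ∑ i, ∑ j, |Y i j| ≤ ∑ i, ∑ j, |Ystar i j|)
    (hYhat : ∑ i, ∑ j, |Yhat i j| ≤ ∑ i, ∑ j, |Ystar i j|)
    (hsparse : ∀ i, ({j | Ystar i j ≠ 0} : Finset (Fin d)).card ≤ s) :
    ∑ i, ∑ j, |Y i j - Yhat i j| ≤
      2 * Real.sqrt (s * d) * Real.sqrt (∑ i, ∑ j, (Y i j - Yhat i j) ^ 2) +
      4 * Real.sqrt (s * d) * Real.sqrt (∑ i, ∑ j, (Yhat i j - Ystar i j) ^ 2) := by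
  have hk : #{p : Fin d × Fin d | Ystar p.1 p.2 ≠ 0} ≤ s * d := by
    simpa using Ystar.card_filter_ne_zero_le hsparse
  have key := sum_abs_sub_le_of_sum_abs_le_of_sum_abs_le (x := fun p => Y p.1 p.2)
    (x' := fun p => Yhat p.1 p.2) hk
    (by simpa only [Fintype.sum_prod_type] using hY)
    (by simpa only [Fintype.sum_prod_type] using hYhat)
  simpa only [Fintype.sum_prod_type, Nat.cast_mul] using key
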